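/- arXiv:2511.07653 — 7 statements merged into one kernel-verified Lean document; each statement's English description precedes it below -/
import Mathlib

section
/- Comparison theorem: Let I : C(G) → C(G) satisfy the GCP and satisfy I(u − c, x) ≥ I(u, x) for every u ∈ C(G), every constant c ≥ 0, and every x ∈ G. Suppose u, v ∈ C(G) satisfy I(u, x) ≥ I(v, x) for every x ∈ G∖Γ, and that at least one of the following holds: (a) there exists a sequence (u_k) in C(G) with I(u_k, x) > I(u, x) for all x ∈ G∖Γ and all k, and ‖u − u_k‖ → 0; or (b) there exists a sequence (v_k) in C(G) with I(v_k, x) < I(v, x) for all x ∈ G∖Γ and all k, and ‖v − v_k‖ → 0. Then max_{x∈G} (u − v)_+(x) ≤ max_{x∈Γ} (u − v)_+(x), where (u − v)_+ = max{u − v, 0}. -/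
/-- Comparison theorem for operators on graphs with the GCP. -/
theorem comparison_theorem {G : Type*} [Fintype G] [Nonempty G]
    (Γ : Finset G) (hΓne : Γ.Nonempty) (hΓnG : Γ ≠ Finset.univ)
    (I : (G → ℝ) → G → ℝ)
    (hGCP : ∀ u v : G → ℝ, ∀ x₀ : G, (∀ x, u x ≤ v x) → u x₀ = v x₀ → I u x₀ ≤ I v x₀)
    (hConst : ∀ u : G → ℝ, ∀ c : ℝ, 0 ≤ c → ∀ x : G, I u x ≤ I (fun y => u y - c) x)
    (u v : G → ℝ)
    (huv : ∀ x ∉ Γ, I v x ≤ I u x)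
    (hpert :
      (∃ uk : ℕ → G → ℝ,
        (∀ k : ℕ, ∀ x ∉ Γ, I u x < I (uk k) x) ∧
        Filter.Tendsto (fun k => ‖u - uk k‖) Filter.atTop (nhds 0)) ∨
      (∃ vk : ℕ → G → ℝ,
        (∀ k : ℕ, ∀ x ∉ Γ, I (vk k) x < I v x) ∧
        Filter.Tendsto (fun k => ‖v - vk k‖) Filter.atTop (nhds 0))) :
    Finset.univ.sup' Finset.univ_nonempty (fun x => max (u x - v x) 0) ≤
      Γ.sup' hΓne (fun x => max (u x - v x) 0) := by
  by_contra hcon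
  push_neg at hcon
  set f : G → ℝ := fun x => max (u x - v x) 0 with hf
  set MΓ : ℝ := Γ.sup' hΓne f with hMΓ
  obtain ⟨z, hz⟩ := hΓne
  have hMΓ0 : (0 : ℝ) ≤ MΓ :=
    le_trans (le_max_right (u z - v z) 0) (Finset.le_sup' f hz)
  obtain ⟨xs, -, hxs⟩ := Finset.exists_mem_eq_sup' Finset.univ_nonempty f
  have hsup : MΓ < f xs := by rw [← hxs]; exact hcon
  have hfxs : f xs = u xs - v xs := by
    rcases max_choice (u xs - v xs) 0 with h | h
    · exact h
    · have h0 : f xs = 0 := h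
      linarith
  set ε : ℝ := (f xs - MΓ) / 2 with hε
  have hεpos : 0 < ε := by rw [hε]; linarith
  rcases hpert with ⟨uk, hlt, htend⟩ | ⟨vk, hlt, htend⟩
  · obtain ⟨k, hk⟩ := (htend.eventually_lt_const hεpos).exists
    set g : G → ℝ := uk k with hg
    have habs : ∀ x, |u x - g x| ≤ ‖u - g‖ := fun x => by
      simpa using norm_le_pi_norm (u - g) x
    obtain ⟨xk, -, hxk⟩ := Finset.exists_mem_eq_sup' (Finset.univ_nonempty (α := G))
      (fun x => g x - v x)
    set Mk : ℝ := Finset.univ.sup' Finset.univ_nonempty (fun x => g x - v x) with hMk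
    have hle : ∀ x, g x - v x ≤ Mk := fun x =>
      Finset.le_sup' (fun x => g x - v x) (Finset.mem_univ x)
    have hMkge : f xs - ‖u - g‖ ≤ Mk := by
      have h1 := hle xs
      have h2 := (abs_le.mp (habs xs)).2
      linarith
    have hMkbig : MΓ + ε < Mk := by
      rw [hε] at hk ⊢
      linarith
    have hMkpos : (0 : ℝ) ≤ Mk := by linarith
    have hxkΓ : xk ∉ Γ := by
      intro hmem
      have h1 := (abs_le.mp (habs xk)).1
      have h2 : u xk - v xk ≤ MΓ :=
        le_trans (le_max_left _ _) (Finset.le_sup' f hmem)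
      have h3 : Mk = g xk - v xk := hxk
      linarith
    have h1 : I u xk < I g xk := hlt k xk hxkΓ
    have h2 : I g xk ≤ I (fun y => g y - Mk) xk := hConst g Mk hMkpos xk
    have h3 : I (fun y => g y - Mk) xk ≤ I v xk := by
      refine hGCP _ v xk (fun x => ?_) ?_
      · show g x - Mk ≤ v x
        linarith [hle x]
      · show g xk - Mk = v xk
        have h3 : Mk = g xk - v xk := hxk
        linarith
    have h4 : I v xk ≤ I u xk := huv xk hxkΓ
    linarith
  · obtain ⟨k, hk⟩ := (htend.eventually_lt_const hεpos).exists
    set g : G → ℝ := vk k with hg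
    have habs : ∀ x, |v x - g x| ≤ ‖v - g‖ := fun x => by
      simpa using norm_le_pi_norm (v - g) x
    obtain ⟨xk, -, hxk⟩ := Finset.exists_mem_eq_sup' (Finset.univ_nonempty (α := G))
      (fun x => u x - g x)
    set Mk : ℝ := Finset.univ.sup' Finset.univ_nonempty (fun x => u x - g x) with hMk
    have hle : ∀ x, u x - g x ≤ Mk := fun x =>
      Finset.le_sup' (fun x => u x - g x) (Finset.mem_univ x)
    have hMkge : f xs - ‖v - g‖ ≤ Mk := by
      have h1 := hle xs
      have h2 := (abs_le.mp (habs xs)).1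
      linarith
    have hMkbig : MΓ + ε < Mk := by
      rw [hε] at hk ⊢
      linarith
    have hMkpos : (0 : ℝ) ≤ Mk := by linarith
    have hxkΓ : xk ∉ Γ := by
      intro hmem
      have h1 := (abs_le.mp (habs xk)).2
      have h2 : u xk - v xk ≤ MΓ :=
        le_trans (le_max_left _ _) (Finset.le_sup' f hmem)
      have h3 : Mk = u xk - g xk := hxk
      linarith
    have h1 : I u xk ≤ I (fun y => u y - Mk) xk := hConst u Mk hMkpos xk
    have h2 : I (fun y => u y - Mk) xk ≤ I g xk := by
      refine hGCP _ g xk (fun x => ?_) ?_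
      · show u x - Mk ≤ g x
        linarith [hle x]
      · show u xk - Mk = g xk
        have h3 : Mk = u xk - g xk := hxk
        linarith
    have h3 : I g xk < I v xk := hlt k xk hxkΓ
    have h4 : I v xk ≤ I u xk := huv xk hxkΓ
    linarith
end

section
/- Perron existence theorem: Let I : C(G) → C(G) satisfy: (i) the GCP; (ii) I(u − c, x) ≥ I(u, x) for every u ∈ C(G), constant c ≥ 0, and x ∈ G; (iii) for each fixed x ∈ G the map u ↦ I(u, x) is upper semicontinuous on C(G); (iv) the positive perturbation property: for every x₀ ∈ G, u ∈ C(G), and ε > 0 there is δ > 0 such that for all 0 < t < δ, inf_{x∈G∖Γ}(I(u + t·b_{x₀}, x) − I(u, x)) ≥ −ε, where b_{x₀} is the indicator function of {x₀}. Let f, g ∈ C(G) and suppose there exist U, V ∈ C(G) with I(U, x) ≥ f(x) for all x ∈ G∖Γ, U ≤ g on Γ, I(V, x) ≤ f(x) for all x ∈ G∖Γ, and V ≥ g on Γ. Suppose moreover the comparison principle holds: for all u, v ∈ C(G), if I(u, x) ≥ I(v, x) for all x ∈ G∖Γ and u ≤ v on Γ, then u ≤ v on G. Then there exists u ∈ C(G)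 with I(u, x) = f(x) for all x ∈ G∖Γ and u(x) = g(x) for all x ∈ Γ. -/
/-- Perron existence theorem for elliptic equations on graphs. -/
theorem perron_existence {G : Type*} [Fintype G] [Nonempty G] [DecidableEq G]
    (Γ : Finset G) (hΓne : Γ.Nonempty) (hΓnG : Γ ≠ Finset.univ)
    (I : (G → ℝ) → G → ℝ)
    (hGCP : ∀ u v : G → ℝ, ∀ x₀ : G, (∀ x, u x ≤ v x) → u x₀ = v x₀ → I u x₀ ≤ I v x₀)
    (hConst : ∀ u : G → ℝ, ∀ c : ℝ, 0 ≤ c → ∀ x : G, I u x ≤ I (fun y => u y - c) x)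
    (husc : ∀ x : G, UpperSemicontinuous (fun u : G → ℝ => I u x))
    (hbump : ∀ x₀ : G, ∀ u : G → ℝ, ∀ ε : ℝ, 0 < ε → ∃ δ : ℝ, 0 < δ ∧
      ∀ t : ℝ, 0 < t → t < δ → ∀ x ∉ Γ,
        I (fun y => u y + t * (if y = x₀ then (1 : ℝ) else 0)) x - I u x ≥ -ε)
    (f g : G → ℝ)
    (U V : G → ℝ)
    (hUsub : ∀ x ∉ Γ, f x ≤ I U x) (hUg : ∀ x ∈ Γ, U x ≤ g x)
    (hVsuper : ∀ x ∉ Γ, I V x ≤ f x) (hVg : ∀ x ∈ Γ, g x ≤ V x)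
    (hcomp : ∀ u v : G → ℝ,
      (∀ x ∉ Γ, I v x ≤ I u x) → (∀ x ∈ Γ, u x ≤ v x) → ∀ x : G, u x ≤ v x) :
    ∃ u : G → ℝ, (∀ x ∉ Γ, I u x = f x) ∧ (∀ x ∈ Γ, u x = g x) := by
  classical
  set S : Set (G → ℝ) := {w | (∀ x ∉ Γ, f x ≤ I w x) ∧ ∀ x ∈ Γ, w x ≤ g x} with hSdef
  have hUS : U ∈ S := ⟨hUsub, hUg⟩
  have hSV : ∀ w ∈ S, ∀ x, w x ≤ V x := fun w hw =>
    hcomp w V (fun x hx => (hVsuper x hx).trans (hw.1 x hx))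
      (fun x hx => (hw.2 x hx).trans (hVg x hx))
  set u : G → ℝ := fun x => sSup ((fun w => w x) '' S) with hudef
  have hne : ∀ x, ((fun w : G → ℝ => w x) '' S).Nonempty := fun x => ⟨U x, U, hUS, rfl⟩
  have hbdd : ∀ x, BddAbove ((fun w : G → ℝ => w x) '' S) := fun x =>
    ⟨V x, by rintro _ ⟨w, hw, rfl⟩; exact hSV w hw x⟩
  have hwu : ∀ w ∈ S, ∀ x, w x ≤ u x := fun w hw x => le_csSup (hbdd x) ⟨w, hw, rfl⟩
  have hug : ∀ x ∈ Γ, u x ≤ g x := fun x hx =>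
    csSup_le (hne x) (by rintro _ ⟨w, hw, rfl⟩; exact hw.2 x hx)
  -- Claim 1 : u ∈ S
  have huS : u ∈ S := by
    refine ⟨?_, hug⟩
    intro x hx
    by_contra hlt
    push_neg at hlt
    have hev := husc x u (f x) hlt
    rw [Metric.eventually_nhds_iff] at hev
    obtain ⟨ε, hε, hball⟩ := hev
    have hchoice : ∀ y : G, ∃ w ∈ S, u y - ε / 2 < w y := by
      intro y
      obtain ⟨_, ⟨w, hw, rfl⟩, h⟩ :=
        exists_lt_of_lt_csSup (hne y) (by linarith : u y - ε / 2 < u y)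
      exact ⟨w, hw, h⟩
    choose wy hwyS hwylt using hchoice
    set w : G → ℝ := fun z => Finset.univ.sup' Finset.univ_nonempty (fun y => wy y z)
      with hwdef
    have hwle : ∀ y z, wy y z ≤ w z := fun y z =>
      Finset.le_sup' (fun y => wy y z) (Finset.mem_univ y)
    have hwS : w ∈ S := by
      constructor
      · intro x' hx'
        obtain ⟨y₀, -, hy₀⟩ :=
          Finset.exists_mem_eq_sup' Finset.univ_nonempty (fun y => wy y x')
        have h1 : I (wy y₀) x' ≤ I w x' :=
          hGCP (wy y₀) w x' (fun z => hwle y₀ z) hy₀.symm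
        exact ((hwyS y₀).1 x' hx').trans h1
      · intro x' hx'
        exact Finset.sup'_le _ _ fun y _ => (hwyS y).2 x' hx'
    have hwleu : ∀ z, w z ≤ u z := fun z =>
      Finset.sup'_le _ _ fun y _ => hwu (wy y) (hwyS y) z
    have hdist : dist w u < ε := by
      rw [dist_pi_lt_iff hε]
      intro y
      rw [Real.dist_eq, abs_sub_lt_iff]
      constructor
      · linarith [hwleu y]
      · linarith [(hwylt y).trans_le (hwle y y)]
    exact absurd (hwS.1 x hx) (not_le.mpr (hball hdist))
  -- Claim 2 : u = g on Γ
  have hgu : ∀ x ∈ Γ, u x = g x := by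
    set ut : G → ℝ := fun y => if y ∈ Γ then g y else u y with hutdef
    have huut : ∀ y, u y ≤ ut y := by
      intro y
      by_cases h : y ∈ Γ
      · simpa [hutdef, h] using hug y h
      · simp [hutdef, h]
    have hutS : ut ∈ S := by
      constructor
      · intro x hx
        refine (huS.1 x hx).trans (hGCP u ut x huut ?_)
        simp [hutdef, hx]
      · intro x hx
        simp [hutdef, hx]
    intro x hx
    refine le_antisymm (hug x hx) ?_
    have := hwu ut hutS x
    simpa [hutdef, hx] using this
  refine ⟨u, ?_, hgu⟩
  intro x₀ hx₀
  refine le_antisymm ?_ (huS.1 x₀ hx₀)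
  by_contra hlt
  push_neg at hlt
  obtain ⟨δ, hδ, hb⟩ := hbump x₀ u (I u x₀ - f x₀) (by linarith)
  set t : ℝ := δ / 2 with htdef
  have ht : 0 < t := by positivity
  set w : G → ℝ := fun y => u y + t * (if y = x₀ then (1 : ℝ) else 0) with hwdef
  have hwS : w ∈ S := by
    constructor
    · intro x hx
      by_cases hxx : x = x₀
      · subst hxx
        have := hb t ht (by linarith) x hx
        simp only [hwdef] at *
        linarith
      · have heq : u x = w x := by simp [hwdef, hxx]
        have hle : ∀ y, u y ≤ w y := by
          intro y
          by_cases h : y = x₀ <;> simp [hwdef, h] <;> linarith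
        exact (huS.1 x hx).trans (hGCP u w x hle heq)
    · intro x hx
      have hxne : x ≠ x₀ := fun h => hx₀ (h ▸ hx)
      simpa [hwdef, hxne] using hug x hx
  have hcon := hwu w hwS x₀
  simp [hwdef] at hcon
  linarith
end

section
/- Convexity plus a strict barrier gives strict supersolution perturbations: Suppose for each fixed x ∈ G the map u ↦ I(u, x) is convex on C(G) (as a real function on ℝ^N under the identification C(G) ≅ ℝ^N), and suppose v ∈ C(G) is such that there exist φ ∈ C(G) and a constant λ > 0 with I(φ, x) ≤ −λ + I(v, x) for all x ∈ G. Then there exists a sequence (v_k) in C(G) such that I(v_k, x) < I(v, x) for all x ∈ G∖Γ and all k, and ‖v − v_k‖ → 0. -/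
/-- Convexity plus a strict barrier gives strict supersolution perturbations. -/
theorem convex_barrier_perturbation {G : Type*} [Fintype G] [Nonempty G]
    (Γ : Finset G) (hΓne : Γ.Nonempty) (hΓnG : Γ ≠ Finset.univ)
    (I : (G → ℝ) → G → ℝ)
    (hconv : ∀ x : G, ConvexOn ℝ (Set.univ : Set (G → ℝ)) (fun u => I u x))
    (v φ : G → ℝ) (lam : ℝ) (hlam : 0 < lam)
    (hbar : ∀ x : G, I φ x ≤ -lam + I v x) :
    ∃ vk : ℕ → G → ℝ,
      (∀ k : ℕ, ∀ x ∉ Γ, I (vk k) x < I v x) ∧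
      Filter.Tendsto (fun k => ‖v - vk k‖) Filter.atTop (nhds 0) := by
  set t : ℕ → ℝ := fun k => 1 / (k + 1) with ht
  have htpos : ∀ k, 0 < t k := fun k => by positivity
  have htle : ∀ k, t k ≤ 1 := by
    intro k
    rw [ht]
    rw [div_le_one (by positivity)]
    linarith [Nat.cast_nonneg (α := ℝ) k]
  refine ⟨fun k => (1 - t k) • v + t k • φ, ?_, ?_⟩
  · intro k x _
    have h := (hconv x).2 (Set.mem_univ v) (Set.mem_univ φ)
      (sub_nonneg.mpr (htle k)) (le_of_lt (htpos k)) (sub_add_cancel 1 (t k))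
    have hb := hbar x
    have : I ((1 - t k) • v + t k • φ) x ≤
        (1 - t k) * I v x + t k * I φ x := h
    nlinarith [htpos k, htle k]
  · have heq : (fun k => ‖v - ((1 - t k) • v + t k • φ)‖)
        = fun k => t k * ‖v - φ‖ := by
      funext k
      have : v - ((1 - t k) • v + t k • φ) = t k • (v - φ) := by
        ext x; simp [smul_sub]; ring
      rw [this, norm_smul, Real.norm_eq_abs, abs_of_pos (htpos k)]
    rw [heq]
    have : Filter.Tendsto t Filter.atTop (nhds 0) :=
      tendsto_one_div_add_atTop_nhds_zero_nat
    simpa [ht, one_div] using this.mul_const ‖v - φ‖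
end

section
/- Continuity of elliptic operators on graphs: Suppose I : C(G) → C(G) satisfies: (i) the GCP; (ii) I(u − c, x) ≥ I(u, x) for every u ∈ C(G), constant c ≥ 0, and x ∈ G; (iii) for each fixed x ∈ G the map u ↦ I(u, x) is upper semicontinuous on C(G); (iv) for every x₀ ∈ G, u ∈ C(G), and ε > 0 there is δ > 0 such that for all 0 < t < δ, inf_{x∈G}(I(u + t·b_{x₀}, x) − I(u, x)) ≥ −ε, where b_{x₀} is the indicator function of {x₀}. Then I is continuous as a map from C(G) with the norm ‖w‖ = max_{y∈G}|w(y)| to C(G). -/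
/-- Elliptic operators on graphs satisfying the assumptions are continuous. -/
theorem elliptic_operator_continuous {G : Type*} [Fintype G] [Nonempty G] [DecidableEq G]
    (I : (G → ℝ) → G → ℝ)
    (hGCP : ∀ u v : G → ℝ, ∀ x₀ : G, (∀ x, u x ≤ v x) → u x₀ = v x₀ → I u x₀ ≤ I v x₀)
    (hConst : ∀ u : G → ℝ, ∀ c : ℝ, 0 ≤ c → ∀ x : G, I u x ≤ I (fun y => u y - c) x)
    (husc : ∀ x : G, UpperSemicontinuous (fun u : G → ℝ => I u x))
    (hbump : ∀ x₀ : G, ∀ u : G → ℝ, ∀ ε : ℝ, 0 < ε → ∃ δ : ℝ, 0 < δ ∧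
      ∀ t : ℝ, 0 < t → t < δ → ∀ x : G,
        I (fun y => u y + t * (if y = x₀ then (1 : ℝ) else 0)) x - I u x ≥ -ε) :
    Continuous I := by
  have lsc : ∀ x : G, LowerSemicontinuous (fun u : G → ℝ => I u x) := by
    intro x u y hy
    have hεpos : 0 < (I u x - y) / 2 := by simpa using by linarith
    obtain ⟨δ, hδpos, hδ⟩ := hbump x u ((I u x - y) / 2) hεpos
    have hc : (0 : ℝ) < δ / 2 := by linarith
    filter_upwards [Metric.ball_mem_nhds u hc] with v hv
    have hdist : ∀ z, |v z - u z| < δ / 2 := by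
      intro z
      have h := (dist_pi_lt_iff hc).1 hv z
      rwa [Real.dist_eq] at h
    set c : ℝ := δ / 2 with hcdef
    set t : ℝ := v x - u x + c with htdef
    have habs := hdist x
    have ht0 : 0 < t := by
      have := abs_lt.1 habs
      simp only [htdef]; linarith [this.1]
    have htδ : t < δ := by
      have := abs_lt.1 habs
      simp only [htdef, hcdef]; linarith [this.2]
    have h1 : I (fun z => u z + t * (if z = x then (1 : ℝ) else 0)) x - I u x
        ≥ -((I u x - y) / 2) := hδ t ht0 htδ x
    have h2 : I (fun z => u z + t * (if z = x then (1 : ℝ) else 0)) x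
        ≤ I (fun z => (u z + t * (if z = x then (1 : ℝ) else 0)) - c) x :=
      hConst (fun z => u z + t * (if z = x then (1 : ℝ) else 0)) c (le_of_lt hc) x
    have h3 : I (fun z => (u z + t * (if z = x then (1 : ℝ) else 0)) - c) x ≤ I v x := by
      apply hGCP _ v x
      · intro z
        by_cases hz : z = x
        · subst hz
          rw [if_pos rfl, mul_one]
          simp only [htdef]
          linarith
        · simp only [if_neg hz]
          have := abs_lt.1 (hdist z)
          simp only [hcdef] at *
          linarith [this.1]
      · rw [if_pos rfl, mul_one]
        simp only [htdef]
        ring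
    show y < I v x
    linarith
  rw [continuous_pi_iff]
  intro x
  rw [continuous_iff_continuousAt]
  intro u
  exact tendsto_order.2 ⟨fun b hb => lsc x u b hb, fun b hb => husc x u b hb⟩
end

section
/- Structure of linear operators with the GCP: If L : C(G) → C(G) is linear (under the identification C(G) ≅ ℝ^N) and satisfies the GCP, then there exist functions c : G → ℝ and a : G × G → ℝ with a(x, y) ≥ 0 for all x, y ∈ G with x ≠ y, such that L(u, x) = c(x)·u(x) + ∑_{y ≠ x} a(x, y)(u(y) − u(x)) for every u ∈ C(G) and x ∈ G. -/
/-- Structure of linear operators with the GCP. -/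
theorem linear_gcp_structure {G : Type*} [Fintype G] [Nonempty G] [DecidableEq G]
    (L : (G → ℝ) → G → ℝ) (hlin : IsLinearMap ℝ L)
    (hGCP : ∀ u v : G → ℝ, ∀ x₀ : G, (∀ x, u x ≤ v x) → u x₀ = v x₀ → L u x₀ ≤ L v x₀) :
    ∃ c : G → ℝ, ∃ a : G → G → ℝ,
      (∀ x y : G, x ≠ y → 0 ≤ a x y) ∧
      ∀ u : G → ℝ, ∀ x : G,
        L u x = c x * u x + ∑ y ∈ Finset.univ \ {x}, a x y * (u y - u x) := by
  set f := IsLinearMap.mk' L hlin with hf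
  set m : G → G → ℝ := fun x y => L ((Pi.single y 1 : G → ℝ)) x with hm
  have h0 : ∀ x : G, L 0 x = 0 := fun x => congrFun (map_zero f) x
  have hnonneg : ∀ x y : G, x ≠ y → 0 ≤ m x y := by
    intro x y hxy
    have hle : ∀ z, (0 : G → ℝ) z ≤ (Pi.single y 1 : G → ℝ) z := by
      intro z
      by_cases h : z = y <;> simp [Pi.single_apply, h]
    have heq : (0 : G → ℝ) x = (Pi.single y 1 : G → ℝ) x := by
      simp [Pi.single_apply, hxy]
    have := hGCP 0 ((Pi.single y 1 : G → ℝ)) x hle heq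
    simpa [h0 x, hm] using this
  refine ⟨fun x => ∑ y, m x y, m, hnonneg, ?_⟩
  intro u x
  have hdecomp : u = ∑ y, u y • (Pi.single y 1 : G → ℝ) := by
    funext z
    simp [Finset.sum_apply, Pi.single_apply]
  have hL : L u x = ∑ y, u y * m x y := by
    conv_lhs => rw [hdecomp]
    have hsum : f (∑ y, u y • (Pi.single y 1 : G → ℝ)) = ∑ y, u y • f ((Pi.single y 1 : G → ℝ)) := by
      rw [map_sum]
      simp
    have : L (∑ y, u y • (Pi.single y 1 : G → ℝ)) x = (∑ y, u y • f ((Pi.single y 1 : G → ℝ))) x := by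
      rw [← hsum]; rfl
    rw [this]
    simp [Finset.sum_apply, hm, hf]
  rw [hL]
  have hx : (Finset.univ : Finset G) = insert x (Finset.univ \ {x}) := by
    ext z
    by_cases h : z = x <;> simp [h]
  have h1 : ∑ y, u y * m x y = u x * m x x + ∑ y ∈ Finset.univ \ {x}, u y * m x y := by
    conv_lhs => rw [hx]
    rw [Finset.sum_insert (by simp)]
  have h2 : ∑ y, m x y = m x x + ∑ y ∈ Finset.univ \ {x}, m x y := by
    conv_lhs => rw [hx]
    rw [Finset.sum_insert (by simp)]
  have h3 : ∑ y ∈ Finset.univ \ {x}, m x y * (u y - u x)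
      = (∑ y ∈ Finset.univ \ {x}, u y * m x y) - (∑ y ∈ Finset.univ \ {x}, m x y) * u x := by
    rw [Finset.sum_mul, ← Finset.sum_sub_distrib]
    apply Finset.sum_congr rfl
    intro y _
    ring
  simp only [h1, h2, h3]
  ring
end

section
/- The Bellman operator satisfies the uniqueness assumptions: Let 𝒦 be a nonempty set of functions K : G × G → ℝ such that each K ∈ 𝒦 satisfies K ≥ 0 and ∑_{y∈G} K(x, y) = 1 for every x ∈ G, and define I(u, x) := inf_{K∈𝒦} ∑_{y∈G} K(x, y)(u(y) − u(x)). Then: (1) I satisfies the GCP; (2) I(u − c, x) = I(u, x) for every u ∈ C(G), constant function c, and x ∈ G; (3) if φ ∈ C(G) satisfies I(φ, x) = 1 for all x ∈ G∖Γ, then for every u ∈ C(G), every t > 0, and every x ∈ G∖Γ, I(u + tφ, x) − I(u, x) ≥ t. -/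
/-- The Bellman operator satisfies the uniqueness assumptions. -/
theorem bellman_uniqueness_assumptions {G : Type*} [Fintype G] [Nonempty G]
    (Γ : Finset G) (hΓne : Γ.Nonempty) (hΓnG : Γ ≠ Finset.univ)
    (𝒦 : Set (G → G → ℝ)) (hne : 𝒦.Nonempty)
    (hpos : ∀ K ∈ 𝒦, ∀ x y : G, 0 ≤ K x y)
    (hmass : ∀ K ∈ 𝒦, ∀ x : G, ∑ y, K x y = 1)
    (I : (G → ℝ) → G → ℝ)
    (hI : ∀ u : G → ℝ, ∀ x : G, I u x = ⨅ K : 𝒦, ∑ y, K.1 x y * (u y - u x)) :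
    (∀ u v : G → ℝ, ∀ x₀ : G, (∀ x, u x ≤ v x) → u x₀ = v x₀ → I u x₀ ≤ I v x₀) ∧
    (∀ u : G → ℝ, ∀ c : ℝ, ∀ x : G, I (fun y => u y - c) x = I u x) ∧
    (∀ φ : G → ℝ, (∀ x ∉ Γ, I φ x = 1) →
      ∀ u : G → ℝ, ∀ t : ℝ, 0 < t → ∀ x ∉ Γ,
        t ≤ I (fun y => u y + t * φ y) x - I u x) := by
  haveI : Nonempty 𝒦 := hne.to_subtype
  have key : ∀ u : G → ℝ, ∀ x : G,
      BddBelow (Set.range fun K : 𝒦 => ∑ y, K.1 x y * (u y - u x)) := by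
    intro u x
    obtain ⟨m, -, hm⟩ := Finset.exists_min_image Finset.univ (fun y => u y - u x)
      ⟨Classical.arbitrary G, Finset.mem_univ _⟩
    refine ⟨u m - u x, ?_⟩
    rintro _ ⟨K, rfl⟩
    calc u m - u x = ∑ y, K.1 x y * (u m - u x) := by
          rw [← Finset.sum_mul, hmass K.1 K.2 x, one_mul]
      _ ≤ ∑ y, K.1 x y * (u y - u x) := by
          refine Finset.sum_le_sum fun y _ => ?_
          exact mul_le_mul_of_nonneg_left (hm y (Finset.mem_univ y)) (hpos K.1 K.2 x y)
  refine ⟨?_, ?_, ?_⟩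
  · intro u v x₀ hle heq
    rw [hI, hI]
    refine ciInf_mono (key u x₀) fun K => ?_
    refine Finset.sum_le_sum fun y _ => ?_
    refine mul_le_mul_of_nonneg_left ?_ (hpos K.1 K.2 x₀ y)
    have := hle y
    linarith [heq]
  · intro u c x
    rw [hI, hI]
    congr 1
    funext K
    congr 1
    funext y
    ring
  · intro φ hφ u t ht x hx
    have h2 : I u x + t * 1 ≤ I (fun y => u y + t * φ y) x := by
      rw [hI (fun y => u y + t * φ y) x, ← hφ x hx]
      refine le_ciInf fun K => ?_
      have ha : I u x ≤ ∑ y, K.1 x y * (u y - u x) := by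
        rw [hI]; exact ciInf_le (key u x) K
      have hb : I φ x ≤ ∑ y, K.1 x y * (φ y - φ x) := by
        rw [hI]; exact ciInf_le (key φ x) K
      have heq : (∑ y, K.1 x y * ((u y + t * φ y) - (u x + t * φ x)))
          = (∑ y, K.1 x y * (u y - u x)) + t * ∑ y, K.1 x y * (φ y - φ x) := by
        rw [Finset.mul_sum, ← Finset.sum_add_distrib]
        refine Finset.sum_congr rfl fun y _ => by ring
      rw [heq]
      have := mul_le_mul_of_nonneg_left hb ht.le
      linarith
    linarith
end

section
/- Construction of sub- and supersolutions for the modified eikonal operator from the path distance: Let w : G × G → [0, ∞), define I_e(u, x) := max_{z∈G} w(z, x)·(u(z) − u(x)), and let f, g ∈ C(G) with f(x) > 0 for all x ∈ G. Suppose d ∈ C(G) satisfies max_{y∈G} w(y, x)·(d(x) − d(y)) = 1 for all x ∈ G∖Γ and d(x) = 0 for all x ∈ Γ. Then: (1) the constant function V ≡ max_{x∈Γ} g(x) satisfies I_e(V, x) ≤ f(x) for all x ∈ G∖Γ and V ≥ g on Γ; (2) the function U := −(max_{x∈G} f(x))·d + min_{x∈Γ} g(x) satisfies I_e(U, x) ≥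 f(x) for all x ∈ G∖Γ and U ≤ g on Γ. -/
/-! `Ie` vanishes on constants, so a constant is a subsolution. It is positively homogeneous and
invariant under adding constants, so on `G \ Γ` the eikonal equation for `d` gives
`Ie (-(max f) • d + c) = max f ≥ f`. -/

/-- The modified eikonal operator. -/
noncomputable def Ie {G : Type*} [Fintype G] (w : G → G → ℝ) (u : G → ℝ) (x : G) : ℝ :=
  ⨆ z : G, w z x * (u z - u x)

lemma Ie_const {G : Type*} [Fintype G] (w : G → G → ℝ) (c : ℝ) (x : G) :
    Ie w (fun _ => c) x = 0 := by
  simp [Ie]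

lemma Ie_neg_mul_add_const {G : Type*} [Fintype G] (w : G → G → ℝ) (u : G → ℝ) {c : ℝ}
    (hc : 0 ≤ c) (b : ℝ) (x : G) :
    Ie w (fun y => -c * u y + b) x = c * ⨆ z, w z x * (u x - u z) := by
  rw [Real.mul_iSup_of_nonneg hc, Ie]
  congr 1
  funext z
  ring

theorem eikonal_sub_supersolutions_general {G : Type*} [Fintype G] [Nonempty G]
    (Γ : Finset G) (hΓne : Γ.Nonempty)
    (w : G → G → ℝ)
    (f g : G → ℝ) (hf : ∀ x : G, 0 < f x)
    (d : G → ℝ)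
    (hd : ∀ x ∉ Γ, (⨆ y : G, w y x * (d x - d y)) = 1)
    (hd0 : ∀ x ∈ Γ, d x = 0) :
    ((∀ x ∉ Γ, Ie w (fun _ => Γ.sup' hΓne g) x ≤ f x) ∧
      (∀ x ∈ Γ, g x ≤ Γ.sup' hΓne g)) ∧
    ((∀ x ∉ Γ,
        f x ≤ Ie w (fun y => -(Finset.univ.sup' Finset.univ_nonempty f) * d y
          + Γ.inf' hΓne g) x) ∧
      (∀ x ∈ Γ,
        -(Finset.univ.sup' Finset.univ_nonempty f) * d x + Γ.inf' hΓne g ≤ g x)) := by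
  have hf_le_max (x : G) : f x ≤ Finset.univ.sup' Finset.univ_nonempty f :=
    Finset.le_sup' f (Finset.mem_univ x)
  have hmax_nonneg : 0 ≤ Finset.univ.sup' Finset.univ_nonempty f :=
    (hf (Classical.arbitrary G)).le.trans (hf_le_max _)
  refine ⟨⟨fun x _ => ?_, fun x hx => Finset.le_sup' g hx⟩, ⟨fun x hx => ?_, fun x hx => ?_⟩⟩
  · rw [Ie_const]
    exact (hf x).le
  · rw [Ie_neg_mul_add_const w d hmax_nonneg, hd x hx, mul_one]
    exact hf_le_max x
  · rw [hd0 x hx, mul_zero, zero_add]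
    exact Finset.inf'_le g hx

/-- Construction of sub- and supersolutions for the modified eikonal operator
from the path distance function. -/
theorem eikonal_sub_supersolutions {G : Type*} [Fintype G] [Nonempty G]
    (Γ : Finset G) (hΓne : Γ.Nonempty) (hΓnG : Γ ≠ Finset.univ)
    (w : G → G → ℝ) (hw : ∀ x y : G, 0 ≤ w x y)
    (f g : G → ℝ) (hf : ∀ x : G, 0 < f x)
    (d : G → ℝ)
    (hd : ∀ x ∉ Γ, (⨆ y : G, w y x * (d x - d y)) = 1)
    (hd0 : ∀ x ∈ Γ, d x = 0) :
    ((∀ x ∉ Γ, Ie w (fun _ => Γ.sup' hΓne g) x ≤ f x) ∧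
      (∀ x ∈ Γ, g x ≤ Γ.sup' hΓne g)) ∧
    ((∀ x ∉ Γ,
        f x ≤ Ie w (fun y => -(Finset.univ.sup' Finset.univ_nonempty f) * d y
          + Γ.inf' hΓne g) x) ∧
      (∀ x ∈ Γ,
        -(Finset.univ.sup' Finset.univ_nonempty f) * d x + Γ.inf' hΓne g ≤ g x)) :=
  eikonal_sub_supersolutions_general Γ hΓne w f g hf d hd hd0
end
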